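/- Assume conditions S1* and S2* hold. Then exactly one of the following two regimes holds: (α) V̂(x) > V_c(x) for all x ≥ x*; or (β) V̂(x) = V_c(x) for all x ≥ x* (including the case that both are infinite for all x). Moreover, in regime (α), for every n > 0 the stopping problem T̂ζ̂_n (where ζ̂_n = T̂ⁿ0) admits an optimal stopping time, and so does the stopping problem T̂V̂: in each case there exists a maximiser x̂ ≤ x* of the relevant ratio ĥ(·,ζ̂)/φ_r such that τ_{x̂} is optimal for all initial states x ≥ x̂. -/

import Mathlib

open Filter Set Topology

noncomputable section

/-- The filter of real numbers tending to the (possibly infinite) boundary point `a ∈ [-∞,∞]`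
from the right, i.e. "x → a, x > a". -/
def fromRight (a : EReal) : Filter ℝ :=
  Filter.comap (fun x : ℝ => (x : EReal)) (nhdsWithin a (Set.Ioi a))

/-- The filter of real numbers tending to the boundary point `b` from the left. -/
def fromLeft (b : EReal) : Filter ℝ :=
  Filter.comap (fun x : ℝ => (x : EReal)) (nhdsWithin b (Set.Iio b))

/-- An abstract setup for optimal stopping of a regular one-dimensional diffusion
`X` on the interval `I = (a,b)` with natural boundaries, discount rate `r`, and
fundamental `r`-excessive functions `ψ_r` (increasing) and `φ_r` (decreasing).

`Stop` is the collection of stopping times of `X`; for a stopping time `τ`,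
`E x τ ϑ` denotes the expected discounted reward `E^x[e^{-rτ} ϑ(X_τ) 1_{τ<∞}]`,
`P x τ S` denotes the probability `ℙ^x(X_τ ∈ S, τ < ∞)`, `hit y` is the first
hitting time `τ_y = inf{t ≥ 0 : X_t = y}`, and `never` is the stopping time `τ ≡ ∞`. -/
structure Setup where
  a : EReal
  b : EReal
  hab : a < b
  r : ℝ
  hr : 0 < r
  psi : ℝ → ℝ
  phi : ℝ → ℝ
  Stop : Type
  never : Stop
  hit : ℝ → Stop
  E : ℝ → Stop → (ℝ → EReal) → EReal
  P : ℝ → Stop → Set ℝ → ENNReal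
  psi_pos : ∀ ⦃x : ℝ⦄, a < ↑x → ↑x < b → 0 < psi x
  phi_pos : ∀ ⦃x : ℝ⦄, a < ↑x → ↑x < b → 0 < phi x
  psi_cont : ContinuousOn psi {x : ℝ | a < ↑x ∧ ↑x < b}
  phi_cont : ContinuousOn phi {x : ℝ | a < ↑x ∧ ↑x < b}
  psi_mono : StrictMonoOn psi {x : ℝ | a < ↑x ∧ ↑x < b}
  phi_anti : StrictAntiOn phi {x : ℝ | a < ↑x ∧ ↑x < b}
  psi_lim_a : Filter.Tendsto psi (fromRight a) (nhds 0)
  psi_lim_b : Filter.Tendsto psi (fromLeft b) Filter.atTop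
  phi_lim_b : Filter.Tendsto phi (fromLeft b) (nhds 0)
  phi_lim_a : Filter.Tendsto phi (fromRight a) Filter.atTop
  psi_excessive : ∀ ⦃x : ℝ⦄, a < ↑x → ↑x < b → ∀ τ : Stop,
    E x τ (fun s => ((psi s : ℝ) : EReal)) ≤ ((psi x : ℝ) : EReal)
  phi_excessive : ∀ ⦃x : ℝ⦄, a < ↑x → ↑x < b → ∀ τ : Stop,
    E x τ (fun s => ((phi s : ℝ) : EReal)) ≤ ((phi x : ℝ) : EReal)
  E_never : ∀ (x : ℝ) (ϑ : ℝ → EReal), E x never ϑ = 0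
  E_mono : ∀ (x : ℝ) (τ : Stop) (ϑ ϑ' : ℝ → EReal),
    (∀ s : ℝ, a < ↑s → ↑s < b → ϑ s ≤ ϑ' s) → E x τ ϑ ≤ E x τ ϑ'
  E_smul : ∀ (x : ℝ) (τ : Stop) (c : ℝ) (ϑ : ℝ → EReal), 0 ≤ c →
    E x τ (fun s => (c : EReal) * ϑ s) = (c : EReal) * E x τ ϑ
  E_hit_lt : ∀ ⦃x y : ℝ⦄, a < ↑x → ↑y < b → x < y → ∀ ϑ : ℝ → EReal,
    E x (hit y) ϑ = ϑ y * ((psi x / psi y : ℝ) : EReal)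
  E_hit_ge : ∀ ⦃x y : ℝ⦄, a < ↑y → ↑x < b → y ≤ x → ∀ ϑ : ℝ → EReal,
    E x (hit y) ϑ = ϑ y * ((phi x / phi y : ℝ) : EReal)
  regular : ∀ ⦃x y : ℝ⦄, a < ↑x → ↑x < b → a < ↑y → ↑y < b →
    0 < P x (hit y) Set.univ

/-- Embedding of a real-valued payoff into `EReal`. -/
def toE (ϑ : ℝ → ℝ) : ℝ → EReal := fun s => ((ϑ s : ℝ) : EReal)

namespace Setup
variable (S : Setup)

/-- The state space `I = (a,b)`. -/
def I : Set ℝ := {x : ℝ | S.a < ↑x ∧ ↑x < S.b}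

/-- The value function `v(x) = sup_τ E^x[e^{-rτ} ϑ(X_τ) 1_{τ<∞}]`. -/
def val (ϑ : ℝ → EReal) (x : ℝ) : EReal := ⨆ τ : S.Stop, S.E x τ ϑ

/-- A stopping time `τ` is optimal for the problem `v(x)` if it attains the supremum. -/
def IsOptimal (ϑ : ℝ → EReal) (x : ℝ) (τ : S.Stop) : Prop :=
  S.E x τ ϑ = S.val ϑ x

/-- `L_c = limsup_{x→a} (−x)/φ_r(x)`. -/
def Lc : EReal := Filter.limsup (fun x : ℝ => ((-x / S.phi x : ℝ) : EReal)) (fromRight S.a)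

end Setup

/-- The single option payoff `h(x) = -x + p_c + K_c·ψ_r(x)/ψ_r(x*)` for `x < x*` and
`h(x) = -x + p_c + K_c` for `x ≥ x*`. -/
def hpay (S : Setup) (pc Kc xstar : ℝ) (x : ℝ) : ℝ :=
  if x < xstar then -x + pc + Kc * (S.psi x / S.psi xstar) else -x + pc + Kc

/-- Case A: `L_c ≤ h(x)/φ_r(x)` for some `x ∈ I`. -/
def caseA (S : Setup) (pc Kc xstar : ℝ) : Prop :=
  ∃ x ∈ S.I, S.Lc ≤ ((hpay S pc Kc xstar x / S.phi x : ℝ) : EReal)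

/-- Case B: `∞ > L_c > h(x)/φ_r(x)` for all `x ∈ I`. -/
def caseB (S : Setup) (pc Kc xstar : ℝ) : Prop :=
  S.Lc ≠ ⊤ ∧ ∀ x ∈ S.I, ((hpay S pc Kc xstar x / S.phi x : ℝ) : EReal) < S.Lc

/-- Case C: `L_c = ∞`. -/
def caseC (S : Setup) : Prop := S.Lc = ⊤

/-- The payoff `ĥ(x,ζ̂)` of the normalised lifetime problem with continuation value `ζ̂`:
`ĥ(x,ζ̂) = −x + p_c + (K_c + A·ζ̂(x*))·ψ_r(x)/ψ_r(x*)` for `x < x*`, and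
`ĥ(x,ζ̂) = −x + p_c + K_c + A·ζ̂(x)` for `x ≥ x*`. -/
def hhat (S : Setup) (pc Kc xstar A : ℝ) (ζ : ℝ → EReal) (x : ℝ) : EReal :=
  if x < xstar then
    ((-x + pc : ℝ) : EReal)
      + ((S.psi x / S.psi xstar : ℝ) : EReal) * (((Kc : ℝ) : EReal) + ((A : ℝ) : EReal) * ζ xstar)
  else ((-x + pc + Kc : ℝ) : EReal) + ((A : ℝ) : EReal) * ζ x

/-- The normalised optimal stopping operator `T̂ζ̂(x) = sup_τ E^x[e^{−rτ} ĥ(X_τ,ζ̂) 1_{τ<∞}]`. -/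
def That (S : Setup) (pc Kc xstar A : ℝ) (ζ : ℝ → EReal) : ℝ → EReal :=
  fun x => ⨆ τ : S.Stop, S.E x τ (hhat S pc Kc xstar A ζ)

/-- The iterate `T̂ⁿ0`. -/
def ThatIter (S : Setup) (pc Kc xstar A : ℝ) (n : ℕ) : ℝ → EReal :=
  (That S pc Kc xstar A)^[n] (fun _ => 0)

/-- The lifetime value function `V̂(x) = lim_{n→∞} T̂ⁿ0(x)`; since the iterates are monotone
in `n`, the limit is the (pointwise monotone) supremum. -/
def Vhat (S : Setup) (pc Kc xstar A : ℝ) (x : ℝ) : EReal :=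
  ⨆ n : ℕ, ThatIter S pc Kc xstar A n x

/-- An admissible continuation value: (real-valued) nonnegative on `I`, continuous on
`(a,x*]`, with `ζ̂/φ_r` nonincreasing on `[x*,b)`. -/
def Admissible (S : Setup) (xstar : ℝ) (ζ : ℝ → EReal) : Prop :=
  (∀ x ∈ S.I, 0 ≤ ζ x ∧ ζ x ≠ ⊤) ∧
  ContinuousOn ζ {x : ℝ | S.a < ↑x ∧ x ≤ xstar} ∧
  AntitoneOn (fun x => ζ x / ((S.phi x : ℝ) : EReal)) {x : ℝ | xstar ≤ x ∧ ↑x < S.b}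

/-- Regime (α): the lifetime value strictly dominates the single option value on `[x*,b)`. -/
def regimeAlpha (S : Setup) (pc Kc xstar A : ℝ) : Prop :=
  ∀ x ∈ S.I, xstar ≤ x →
    S.val (toE (hpay S pc Kc xstar)) x < Vhat S pc Kc xstar A x

/-- Regime (β): the lifetime value equals the single option value on `[x*,b)`
(including the case that both are infinite). -/
def regimeBeta (S : Setup) (pc Kc xstar A : ℝ) : Prop :=
  ∀ x ∈ S.I, xstar ≤ x →
    Vhat S pc Kc xstar A x = S.val (toE (hpay S pc Kc xstar)) x


/-! If `ζ = μ φ_r` on `[x*, b)`, then on `[x*, b)` the ratio `ĥ(·, ζ)/φ_r` equals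
`(p_c + K_c - y)/φ_r(y) + Aμ`, which by `S2*` is largest at `x*`. Stopping at `τ_y` shows
`T̂ζ(x) ≥ φ_r(x) ĥ(y, ζ)/φ_r(y)` for `y ≤ x`, while `φ_r` being `r`-excessive gives
`T̂ζ ≤ φ_r · sup ĥ(·, ζ)/φ_r`; so `T̂ζ = (sup ĥ(·, ζ)/φ_r) φ_r` on `[x*, b)`. Hence every iterate
`T̂ⁿ0` is `μ_n φ_r` there, with `μ_n` increasing, and `V̂ = (sup_n μ_n) φ_r`; as `V_c = T̂0`, the
regimes are `μ_1 < sup μ_n` and `μ_1 = sup μ_n`.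
In regime (α) the iteration is not stationary from `n = 1`, so `L_c ≤ μ_1 < μ_2`, and each later
problem has ratio supremum above `L_c`, the `limsup` of the ratio at `a`. By continuity the ratio
then attains its supremum at some `x̂ ≤ x*`, and `τ_x̂` is optimal from every `x ≥ x̂`. -/

namespace EReal

lemma mul_coe_div_coe {c : ℝ} (hc : c ≠ 0) (u : EReal) : u * c / c = u := by
  rw [← mul_div_right, div_mul_cancel (coe_ne_bot c) (coe_ne_top c) (by exact_mod_cast hc)]

lemma strictMono_mul_coe {c : ℝ} (hc : 0 < c) : StrictMono fun u : EReal => u * c := by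
  intro u v huv
  rwa [← lt_div_iff (by exact_mod_cast hc) (coe_ne_top c), mul_coe_div_coe hc.ne']

lemma iSup_mul_coe {ι : Sort*} (f : ι → EReal) {c : ℝ} (hc : 0 < c) :
    (⨆ i, f i) * c = ⨆ i, f i * c := by
  have hc' : (0 : EReal) < c := by exact_mod_cast hc
  refine le_antisymm ?_ (iSup_le fun i => (strictMono_mul_coe hc).monotone (le_iSup f i))
  rw [← le_div_iff_mul_le hc' (coe_ne_top c)]
  exact iSup_le fun i => (le_div_iff_mul_le hc' (coe_ne_top c)).2 (le_iSup (fun j => f j * c) i)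

end EReal

lemma exists_forall_of_eventually_fromRight {a : EReal} (ha : a ≠ ⊤) {p : ℝ → Prop}
    (h : ∀ᶠ y in fromRight a, p y) :
    ∃ w : ℝ, a < w ∧ ∀ y : ℝ, a < y → y < w → p y := by
  obtain ⟨T, hT, hTp⟩ := Filter.mem_comap.mp h
  obtain ⟨u, hau, hu⟩ := (mem_nhdsGT_iff_exists_Ioo_subset' (lt_top_iff_ne_top.2 ha)).mp hT
  obtain ⟨w, haw, hwu⟩ := EReal.exists_between_coe_real hau
  exact ⟨w, haw, fun y hay hyw => hTp (hu ⟨hay, (EReal.coe_lt_coe_iff.2 hyw).trans hwu⟩)⟩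

lemma exists_isMaxOn_of_eventually_lt {a : EReal} {c r : ℝ} {f : ℝ → ℝ}
    (hf : ContinuousOn f {y : ℝ | a < y ∧ y ≤ c}) (hr : ∀ᶠ y in fromRight a, f y < r)
    {y₀ : ℝ} (hy₀ : y₀ ∈ {y : ℝ | a < y ∧ y ≤ c}) (hfy₀ : r < f y₀) :
    ∃ xhat ∈ {y : ℝ | a < y ∧ y ≤ c}, IsMaxOn f {y : ℝ | a < y ∧ y ≤ c} xhat := by
  obtain ⟨w, haw, hw⟩ := exists_forall_of_eventually_fromRight (ne_top_of_lt hy₀.1) hr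
  have hwy₀ : w ≤ y₀ := not_lt.1 fun h => (hw y₀ hy₀.1 h).not_gt hfy₀
  have hsub : Icc w c ⊆ {y : ℝ | a < y ∧ y ≤ c} := fun y hy =>
    ⟨haw.trans_le (EReal.coe_le_coe_iff.2 hy.1), hy.2⟩
  obtain ⟨xhat, hxhat, hmax⟩ :=
    isCompact_Icc.exists_isMaxOn (nonempty_Icc.2 (hwy₀.trans hy₀.2)) (hf.mono hsub)
  refine ⟨xhat, hsub hxhat, isMaxOn_iff.2 fun y hy => ?_⟩
  rcases lt_or_ge y w with hyw | hwy
  · exact ((hw y hy.1 hyw).trans (hfy₀.trans_le (hmax ⟨hwy₀, hy₀.2⟩))).le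
  · exact hmax ⟨hwy, hy.2⟩

namespace Setup

variable (S : Setup)

def supRatio (ϑ : ℝ → EReal) : EReal := ⨆ y : S.I, ϑ y / S.phi y

variable {S}

lemma eventually_mem_I_lt {c : ℝ} (hc : c ∈ S.I) :
    ∀ᶠ y in fromRight S.a, y ∈ S.I ∧ y < c := by
  have hmem : Ioi S.a ∩ Iio (c : EReal) ∈ 𝓝[>] S.a :=
    inter_mem self_mem_nhdsWithin (nhdsWithin_le_nhds (isOpen_Iio.mem_nhds hc.1))
  filter_upwards [preimage_mem_comap hmem] with y ⟨hay, hyc⟩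
  exact ⟨⟨hay, hyc.trans hc.2⟩, EReal.coe_lt_coe_iff.1 hyc⟩

lemma psi_div_psi_pos {x y : ℝ} (hx : x ∈ S.I) (hy : y ∈ S.I) : 0 < S.psi x / S.psi y :=
  div_pos (S.psi_pos hx.1 hx.2) (S.psi_pos hy.1 hy.2)

lemma val_nonneg (ϑ : ℝ → EReal) (x : ℝ) : 0 ≤ S.val ϑ x :=
  (S.E_never x ϑ).symm.le.trans (le_iSup (fun τ => S.E x τ ϑ) S.never)

lemma E_hit_eq_div_phi_mul_phi {x y : ℝ} (hy : y ∈ S.I) (hx : x ∈ S.I) (hyx : y ≤ x)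
    (ϑ : ℝ → EReal) : S.E x (S.hit y) ϑ = ϑ y / S.phi y * S.phi x := by
  rw [S.E_hit_ge hy.1 hx.2 hyx, div_eq_inv_mul, EReal.coe_mul, EReal.coe_inv, ← mul_assoc]
  rfl

lemma div_phi_mul_phi_le_val {x y : ℝ} (hy : y ∈ S.I) (hx : x ∈ S.I) (hyx : y ≤ x)
    (ϑ : ℝ → EReal) : ϑ y / S.phi y * S.phi x ≤ S.val ϑ x :=
  (S.E_hit_eq_div_phi_mul_phi hy hx hyx ϑ).symm.le.trans (le_iSup (fun τ => S.E x τ ϑ) _)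

lemma val_le_mul_phi {ϑ : ℝ → EReal} {m : ℝ} (hm : 0 ≤ m)
    (hϑ : ∀ s ∈ S.I, ϑ s ≤ m * S.phi s) {x : ℝ} (hx : x ∈ S.I) :
    S.val ϑ x ≤ m * S.phi x := by
  refine iSup_le fun τ => ?_
  calc S.E x τ ϑ ≤ S.E x τ (fun s => m * S.phi s) :=
        S.E_mono x τ _ _ fun s has hsb => hϑ s ⟨has, hsb⟩
    _ = m * S.E x τ (fun s => S.phi s) := S.E_smul x τ m _ hm
    _ ≤ m * S.phi x :=
        mul_le_mul_of_nonneg_left (S.phi_excessive hx.1 hx.2 τ) (by exact_mod_cast hm)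

lemma val_le_supRatio_mul_phi {ϑ : ℝ → EReal} (h0 : 0 ≤ S.supRatio ϑ) {x : ℝ}
    (hx : x ∈ S.I) : S.val ϑ x ≤ S.supRatio ϑ * S.phi x := by
  have hle : ∀ s ∈ S.I, ϑ s / S.phi s ≤ S.supRatio ϑ := fun s hs =>
    le_iSup (fun y : S.I => ϑ y / S.phi y) ⟨s, hs⟩
  rcases eq_or_ne (S.supRatio ϑ) ⊤ with htop | hne
  · rw [htop, EReal.top_mul_of_pos (by exact_mod_cast S.phi_pos hx.1 hx.2)]
    exact le_top
  lift S.supRatio ϑ to ℝ using ⟨hne, ne_bot_of_le_ne_bot (by simp) h0⟩ with m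
  refine S.val_le_mul_phi (by exact_mod_cast h0) (fun s hs => ?_) hx
  have hφ : (0 : EReal) < S.phi s := by exact_mod_cast S.phi_pos hs.1 hs.2
  rw [mul_comm, ← EReal.div_le_iff_le_mul hφ (EReal.coe_ne_top _)]
  exact hle s hs

lemma val_eq_supRatio_mul_phi {ϑ : ℝ → EReal} (h0 : 0 ≤ S.supRatio ϑ) {x : ℝ}
    (hx : x ∈ S.I)
    (hdom : ∀ y ∈ S.I, x < y → ∃ z ∈ S.I, z ≤ x ∧ ϑ y / S.phi y ≤ ϑ z / S.phi z) :
    S.val ϑ x = S.supRatio ϑ * S.phi x := by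
  refine le_antisymm (S.val_le_supRatio_mul_phi h0 hx) ?_
  have hφ : (0 : EReal) < S.phi x := by exact_mod_cast S.phi_pos hx.1 hx.2
  rw [← EReal.le_div_iff_mul_le hφ (EReal.coe_ne_top _)]
  refine iSup_le fun ⟨y, hy⟩ => (EReal.le_div_iff_mul_le hφ (EReal.coe_ne_top _)).2 ?_
  rcases le_or_gt y x with hyx | hxy
  · exact S.div_phi_mul_phi_le_val hy hx hyx ϑ
  · obtain ⟨z, hz, hzx, hyz⟩ := hdom y hy hxy
    exact (mul_le_mul_of_nonneg_right hyz hφ.le).trans (S.div_phi_mul_phi_le_val hz hx hzx ϑ)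

lemma isOptimal_hit_of_forall_le {ϑ : ℝ → EReal} {xhat : ℝ} (hxhat : xhat ∈ S.I)
    (hmax : ∀ y ∈ S.I, ϑ y / S.phi y ≤ ϑ xhat / S.phi xhat)
    (h0 : 0 ≤ ϑ xhat / S.phi xhat)
    {x : ℝ} (hx : x ∈ S.I) (hxhat_le : xhat ≤ x) : S.IsOptimal ϑ x (S.hit xhat) := by
  have hsup : S.supRatio ϑ = ϑ xhat / S.phi xhat :=
    le_antisymm (iSup_le fun y => hmax y y.2)
      (le_iSup (fun y : S.I => ϑ y / S.phi y) ⟨xhat, hxhat⟩)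
  refine le_antisymm (le_iSup (fun τ => S.E x τ ϑ) _) ?_
  rw [S.E_hit_eq_div_phi_mul_phi hxhat hx hxhat_le, ← hsup]
  exact S.val_le_supRatio_mul_phi (hsup ▸ h0) hx

end Setup

section Lifetime

def PhiMultipleAbove (S : Setup) (xstar : ℝ) (ζ : ℝ → EReal) (μ : EReal) : Prop :=
  ∀ x ∈ S.I, xstar ≤ x → ζ x = μ * S.phi x

/-- `ĥ(·, ζ)/φ_r` when `ζ = m φ_r` on `[x*, b)`. -/
def hhatRatio (S : Setup) (pc Kc xstar A m : ℝ) (y : ℝ) : ℝ :=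
  (if y < xstar then -y + pc + (Kc + A * m * S.phi xstar) * (S.psi y / S.psi xstar)
   else -y + pc + Kc + A * m * S.phi y) / S.phi y

variable {S : Setup} {pc Kc xstar A : ℝ}

lemma PhiMultipleAbove.nonneg {ζ : ℝ → EReal} {μ : EReal}
    (hζ : PhiMultipleAbove S xstar ζ μ) (hμ : 0 ≤ μ) :
    ∀ x ∈ S.I, xstar ≤ x → 0 ≤ ζ x := fun x hx hxx => by
  rw [hζ x hx hxx]
  exact mul_nonneg hμ (by exact_mod_cast (S.phi_pos hx.1 hx.2).le)

lemma PhiMultipleAbove.unique (hxstar : xstar ∈ S.I) {ζ : ℝ → EReal} {μ μ' : EReal}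
    (h : PhiMultipleAbove S xstar ζ μ) (h' : PhiMultipleAbove S xstar ζ μ') : μ = μ' :=
  (EReal.strictMono_mul_coe (S.phi_pos hxstar.1 hxstar.2)).injective
    ((h xstar hxstar le_rfl).symm.trans (h' xstar hxstar le_rfl))

lemma hhat_zero : hhat S pc Kc xstar A (fun _ => 0) = toE (hpay S pc Kc xstar) := by
  funext y
  simp only [hhat, hpay, toE, mul_zero, add_zero]
  split
  · norm_cast; ring
  · norm_cast

lemma thatIter_succ (n : ℕ) :
    ThatIter S pc Kc xstar A (n + 1) = That S pc Kc xstar A (ThatIter S pc Kc xstar A n) :=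
  Function.iterate_succ_apply' _ _ _

lemma val_hpay_eq_thatIter_one :
    S.val (toE (hpay S pc Kc xstar)) = ThatIter S pc Kc xstar A 1 := by
  rw [← hhat_zero (A := A)]
  rfl

lemma hhat_mono (hxstar : xstar ∈ S.I) (hA : 0 ≤ A) {ζ ζ' : ℝ → EReal}
    (h : ∀ x ∈ S.I, xstar ≤ x → ζ x ≤ ζ' x) {y : ℝ} (hy : y ∈ S.I) :
    hhat S pc Kc xstar A ζ y ≤ hhat S pc Kc xstar A ζ' y := by
  have hA' : (0 : EReal) ≤ A := by exact_mod_cast hA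
  rw [hhat, hhat]
  split
  · refine add_le_add le_rfl (mul_le_mul_of_nonneg_left ?_
      (by exact_mod_cast (S.psi_div_psi_pos hy hxstar).le))
    exact add_le_add le_rfl (mul_le_mul_of_nonneg_left (h xstar hxstar le_rfl) hA')
  · next hyx => exact add_le_add le_rfl (mul_le_mul_of_nonneg_left (h y hy (not_lt.1 hyx)) hA')

lemma that_mono (hxstar : xstar ∈ S.I) (hA : 0 ≤ A) {ζ ζ' : ℝ → EReal}
    (h : ∀ x ∈ S.I, xstar ≤ x → ζ x ≤ ζ' x) (x : ℝ) :
    That S pc Kc xstar A ζ x ≤ That S pc Kc xstar A ζ' x :=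
  iSup_mono fun τ => S.E_mono x τ _ _ fun _ has hsb => hhat_mono hxstar hA h ⟨has, hsb⟩

lemma that_congr (hxstar : xstar ∈ S.I) (hA : 0 ≤ A) {ζ ζ' : ℝ → EReal}
    (h : ∀ x ∈ S.I, xstar ≤ x → ζ x = ζ' x) :
    That S pc Kc xstar A ζ = That S pc Kc xstar A ζ' :=
  funext fun x => le_antisymm (that_mono hxstar hA (fun y hy hyx => (h y hy hyx).le) x)
    (that_mono hxstar hA (fun y hy hyx => (h y hy hyx).ge) x)

lemma monotone_thatIter (hxstar : xstar ∈ S.I) (hA : 0 ≤ A) (x : ℝ) :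
    Monotone fun n => ThatIter S pc Kc xstar A n x := by
  refine monotone_nat_of_le_succ fun n => ?_
  induction n generalizing x with
  | zero => exact S.val_nonneg _ x
  | succ n ih =>
    rw [thatIter_succ, thatIter_succ (n + 1)]
    exact that_mono hxstar hA (fun y _ _ => ih y) x

lemma supRatio_hhat_mono (hxstar : xstar ∈ S.I) (hA : 0 ≤ A) {ζ ζ' : ℝ → EReal}
    (h : ∀ x ∈ S.I, xstar ≤ x → ζ x ≤ ζ' x) :
    S.supRatio (hhat S pc Kc xstar A ζ) ≤ S.supRatio (hhat S pc Kc xstar A ζ') :=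
  iSup_mono fun y => EReal.div_le_div_right_of_nonneg
    (by exact_mod_cast (S.phi_pos y.2.1 y.2.2).le) (hhat_mono hxstar hA h y.2)

lemma supRatio_hhat_nonneg (hxstar : xstar ∈ S.I) (hA : 0 ≤ A)
    (hS1 : ∃ x ∈ S.I, 0 < hpay S pc Kc xstar x) {ζ : ℝ → EReal}
    (hζ : ∀ x ∈ S.I, xstar ≤ x → 0 ≤ ζ x) :
    0 ≤ S.supRatio (hhat S pc Kc xstar A ζ) := by
  obtain ⟨y, hy, hpos⟩ := hS1
  calc (0 : EReal) ≤ toE (hpay S pc Kc xstar) y / S.phi y := by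
        rw [toE, ← EReal.coe_div]
        exact_mod_cast (div_pos hpos (S.phi_pos hy.1 hy.2)).le
    _ ≤ S.supRatio (hhat S pc Kc xstar A fun _ => 0) := by
        rw [hhat_zero]
        exact le_iSup (fun z : S.I => toE (hpay S pc Kc xstar) z / S.phi z) ⟨y, hy⟩
    _ ≤ _ := supRatio_hhat_mono hxstar hA hζ

lemma hhat_div_phi_eq_hhatRatio (hxstar : xstar ∈ S.I) {ζ : ℝ → EReal} {m : ℝ}
    (hζ : PhiMultipleAbove S xstar ζ m) {y : ℝ} (hy : y ∈ S.I) :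
    hhat S pc Kc xstar A ζ y / S.phi y = hhatRatio S pc Kc xstar A m y := by
  rw [hhatRatio, EReal.coe_div, hhat]
  split
  · rw [hζ xstar hxstar le_rfl]
    norm_cast
    ring_nf
  · next hyx =>
    rw [hζ y hy (not_lt.1 hyx)]
    norm_cast
    ring_nf

lemma hhatRatio_le_hhatRatio_xstar (hxstar : xstar ∈ S.I) (hS2 : pc + Kc < xstar) (m : ℝ)
    {y : ℝ} (hy : y ∈ S.I) (hyx : xstar ≤ y) :
    hhatRatio S pc Kc xstar A m y ≤ hhatRatio S pc Kc xstar A m xstar := by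
  have hφy : 0 < S.phi y := S.phi_pos hy.1 hy.2
  have hφs : 0 < S.phi xstar := S.phi_pos hxstar.1 hxstar.2
  have hanti : S.phi y ≤ S.phi xstar := S.phi_anti.antitoneOn hxstar hy hyx
  rw [hhatRatio, hhatRatio, if_neg (not_lt.2 hyx), if_neg (lt_irrefl xstar),
    div_le_div_iff₀ hφy hφs]
  have h1 : (pc + Kc - y) * S.phi xstar ≤ (pc + Kc - y) * S.phi y :=
    mul_le_mul_of_nonpos_left hanti (by linarith)
  have h2 : (pc + Kc - y) * S.phi y ≤ (pc + Kc - xstar) * S.phi y :=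
    mul_le_mul_of_nonneg_right (by linarith) hφy.le
  linarith

lemma hhat_div_phi_xstar_eq_top (hxstar : xstar ∈ S.I) (hA0 : 0 < A) {ζ : ℝ → EReal}
    (hζ : PhiMultipleAbove S xstar ζ ⊤) :
    hhat S pc Kc xstar A ζ xstar / S.phi xstar = ⊤ := by
  have hφ : (0 : EReal) < S.phi xstar := by exact_mod_cast S.phi_pos hxstar.1 hxstar.2
  rw [hhat, if_neg (lt_irrefl xstar), hζ xstar hxstar le_rfl, EReal.top_mul_of_pos hφ,
    EReal.mul_top_of_pos (by exact_mod_cast hA0), EReal.add_top_of_ne_bot (EReal.coe_ne_bot _),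
    EReal.top_div_of_pos_ne_top hφ (EReal.coe_ne_top _)]

lemma hhat_div_phi_le_xstar (hxstar : xstar ∈ S.I) (hA0 : 0 < A) (hS2 : pc + Kc < xstar)
    {ζ : ℝ → EReal} {μ : EReal} (hζ : PhiMultipleAbove S xstar ζ μ) (hμ : 0 ≤ μ)
    {y : ℝ} (hy : y ∈ S.I) (hyx : xstar ≤ y) :
    hhat S pc Kc xstar A ζ y / S.phi y ≤ hhat S pc Kc xstar A ζ xstar / S.phi xstar := by
  induction μ using EReal.rec with
  | bot => exact absurd hμ (by simp)
  | top =>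
    rw [hhat_div_phi_xstar_eq_top hxstar hA0 hζ]
    exact le_top
  | coe m =>
    rw [hhat_div_phi_eq_hhatRatio hxstar hζ hy, hhat_div_phi_eq_hhatRatio hxstar hζ hxstar]
    exact_mod_cast hhatRatio_le_hhatRatio_xstar hxstar hS2 m hy hyx

lemma PhiMultipleAbove.that (hxstar : xstar ∈ S.I) (hA0 : 0 < A)
    (hS1 : ∃ x ∈ S.I, 0 < hpay S pc Kc xstar x) (hS2 : pc + Kc < xstar)
    {ζ : ℝ → EReal} {μ : EReal} (hζ : PhiMultipleAbove S xstar ζ μ) (hμ : 0 ≤ μ) :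
    PhiMultipleAbove S xstar (That S pc Kc xstar A ζ) (S.supRatio (hhat S pc Kc xstar A ζ)) :=
  fun _ hx hxx => S.val_eq_supRatio_mul_phi
    (supRatio_hhat_nonneg hxstar hA0.le hS1 (hζ.nonneg hμ)) hx fun _ hy hxy =>
      ⟨xstar, hxstar, hxx, hhat_div_phi_le_xstar hxstar hA0 hS2 hζ hμ hy (hxx.trans hxy.le)⟩

lemma exists_phiMultipleAbove_thatIter (hxstar : xstar ∈ S.I) (hA0 : 0 < A)
    (hS1 : ∃ x ∈ S.I, 0 < hpay S pc Kc xstar x) (hS2 : pc + Kc < xstar) (n : ℕ) :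
    ∃ μ : EReal, 0 ≤ μ ∧ PhiMultipleAbove S xstar (ThatIter S pc Kc xstar A n) μ := by
  induction n with
  | zero => exact ⟨0, le_rfl, fun x _ _ => (zero_mul _).symm⟩
  | succ n ih =>
    obtain ⟨μ, hμ, hζ⟩ := ih
    rw [thatIter_succ]
    exact ⟨_, supRatio_hhat_nonneg hxstar hA0.le hS1 (hζ.nonneg hμ),
      hζ.that hxstar hA0 hS1 hS2 hμ⟩

section Coefficients

variable {μ : ℕ → EReal}

lemma phiMultipleAbove_vhat
    (hμ : ∀ n, PhiMultipleAbove S xstar (ThatIter S pc Kc xstar A n) (μ n)) :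
    PhiMultipleAbove S xstar (Vhat S pc Kc xstar A) (⨆ n, μ n) :=
  fun x hx hxx => by
    rw [Vhat, EReal.iSup_mul_coe _ (S.phi_pos hx.1 hx.2)]
    exact iSup_congr fun n => hμ n x hx hxx

lemma monotone_coeff (hμ : ∀ n, PhiMultipleAbove S xstar (ThatIter S pc Kc xstar A n) (μ n))
    (hxstar : xstar ∈ S.I) (hA : 0 ≤ A) : Monotone μ := fun k l hkl =>
  (EReal.strictMono_mul_coe (S.phi_pos hxstar.1 hxstar.2)).le_iff_le.1 <| by
    rw [← hμ k xstar hxstar le_rfl, ← hμ l xstar hxstar le_rfl]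
    exact monotone_thatIter hxstar hA xstar hkl

lemma regimeAlpha_iff (hμ : ∀ n, PhiMultipleAbove S xstar (ThatIter S pc Kc xstar A n) (μ n))
    (hxstar : xstar ∈ S.I) :
    regimeAlpha S pc Kc xstar A ↔ μ 1 < ⨆ n, μ n := by
  have hV := phiMultipleAbove_vhat hμ
  constructor
  · intro hα
    have h := hα xstar hxstar le_rfl
    rwa [val_hpay_eq_thatIter_one, hμ 1 xstar hxstar le_rfl, hV xstar hxstar le_rfl,
      (EReal.strictMono_mul_coe (S.phi_pos hxstar.1 hxstar.2)).lt_iff_lt] at h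
  · intro h x hx hxx
    rw [val_hpay_eq_thatIter_one, hμ 1 x hx hxx, hV x hx hxx]
    exact EReal.strictMono_mul_coe (S.phi_pos hx.1 hx.2) h

lemma regimeBeta_iff (hμ : ∀ n, PhiMultipleAbove S xstar (ThatIter S pc Kc xstar A n) (μ n))
    (hxstar : xstar ∈ S.I) :
    regimeBeta S pc Kc xstar A ↔ ⨆ n, μ n = μ 1 := by
  have hV := phiMultipleAbove_vhat hμ
  constructor
  · intro hβ
    have h := hβ xstar hxstar le_rfl
    rwa [val_hpay_eq_thatIter_one, hμ 1 xstar hxstar le_rfl, hV xstar hxstar le_rfl,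
      (EReal.strictMono_mul_coe (S.phi_pos hxstar.1 hxstar.2)).injective.eq_iff] at h
  · intro h x hx hxx
    rw [val_hpay_eq_thatIter_one, hμ 1 x hx hxx, hV x hx hxx, h]

lemma iSup_coeff_eq_of_coeff_two_eq
    (hμ : ∀ n, PhiMultipleAbove S xstar (ThatIter S pc Kc xstar A n) (μ n))
    (hxstar : xstar ∈ S.I) (hA : 0 ≤ A) (h21 : μ 2 = μ 1) :
    ⨆ n, μ n = μ 1 := by
  have hstat : ∀ n, μ (n + 1) = μ 1 := by
    intro n
    induction n with
    | zero => rfl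
    | succ n ih =>
      have hiter : ThatIter S pc Kc xstar A (n + 2) = ThatIter S pc Kc xstar A 2 := by
        rw [thatIter_succ (n + 1), thatIter_succ 1]
        exact that_congr hxstar hA fun x hx hxx => by rw [hμ (n + 1) x hx hxx, hμ 1 x hx hxx, ih]
      rw [← h21]
      exact (hμ (n + 2)).unique hxstar (hiter ▸ hμ 2)
  refine le_antisymm (iSup_le fun n => ?_) (le_iSup μ 1)
  cases n with
  | zero => exact monotone_coeff hμ hxstar hA zero_le_one
  | succ n => exact (hstat n).le

lemma coeff_one_lt_two_of_regimeAlpha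
    (hμ : ∀ n, PhiMultipleAbove S xstar (ThatIter S pc Kc xstar A n) (μ n))
    (hxstar : xstar ∈ S.I) (hA : 0 ≤ A)
    (hα : regimeAlpha S pc Kc xstar A) : μ 1 < μ 2 := by
  refine (monotone_coeff hμ hxstar hA one_le_two).lt_of_ne fun h12 => ?_
  have h := (regimeAlpha_iff hμ hxstar).1 hα
  rw [iSup_coeff_eq_of_coeff_two_eq hμ hxstar hA h12.symm] at h
  exact lt_irrefl _ h

end Coefficients

lemma Lc_le_supRatio_hpay (hxstar : xstar ∈ S.I) (hpc : 0 ≤ pc) (hKc : 0 ≤ Kc) :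
    S.Lc ≤ S.supRatio (toE (hpay S pc Kc xstar)) := by
  refine limsup_le_of_le (by isBoundedDefault) ?_
  filter_upwards [S.eventually_mem_I_lt hxstar] with y ⟨hy, hyx⟩
  refine le_trans ?_ (le_iSup (fun z : S.I => toE (hpay S pc Kc xstar) z / S.phi z) ⟨y, hy⟩)
  rw [toE, ← EReal.coe_div, EReal.coe_le_coe_iff, hpay, if_pos hyx]
  have hψ := mul_nonneg hKc (S.psi_div_psi_pos hy hxstar).le
  exact div_le_div_of_nonneg_right (by linarith) (S.phi_pos hy.1 hy.2).le

lemma continuousOn_hhatRatio (hxstar : xstar ∈ S.I) (m : ℝ) :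
    ContinuousOn (hhatRatio S pc Kc xstar A m) {y : ℝ | S.a < y ∧ y ≤ xstar} := by
  have hsub : {y : ℝ | S.a < y ∧ y ≤ xstar} ⊆ S.I := fun y hy =>
    ⟨hy.1, (EReal.coe_le_coe_iff.2 hy.2).trans_lt hxstar.2⟩
  have hψ : S.psi xstar ≠ 0 := (S.psi_pos hxstar.1 hxstar.2).ne'
  refine ContinuousOn.congr (f := fun y =>
      (-y + pc + (Kc + A * m * S.phi xstar) * (S.psi y / S.psi xstar)) / S.phi y) ?_ ?_
  · refine ContinuousOn.div ?_ (S.phi_cont.mono hsub) fun y hy =>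
      (S.phi_pos (hsub hy).1 (hsub hy).2).ne'
    exact (continuous_id.neg.continuousOn.add continuousOn_const).add
      (continuousOn_const.mul ((S.psi_cont.mono hsub).div_const _))
  · intro y hy
    dsimp only
    rcases hy.2.lt_or_eq with hyx | rfl
    · rw [hhatRatio, if_pos hyx]
    · rw [hhatRatio, if_neg (lt_irrefl _), div_self hψ]
      ring

lemma eventually_hhatRatio_lt (hxstar : xstar ∈ S.I) (m : ℝ) {r : ℝ} (hr : S.Lc < r) :
    ∀ᶠ y in fromRight S.a, hhatRatio S pc Kc xstar A m y < r := by
  -- Below `x*` the ratio is `-y/φ_r(y)` plus a term vanishing at `a`, as `ψ_r → 0`, `φ_r → ∞`.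
  obtain ⟨r₁, hLc, hr₁⟩ := EReal.exists_between_coe_real hr
  have hr₁' : r₁ < r := by exact_mod_cast hr₁
  set C := Kc + A * m * S.phi xstar
  have hdrift : ∀ᶠ y in fromRight S.a, ((-y / S.phi y : ℝ) : EReal) < r₁ :=
    eventually_lt_of_limsup_lt hLc
  have hrest : Tendsto (fun y => (pc + C * (S.psi y / S.psi xstar)) * (S.phi y)⁻¹)
      (fromRight S.a) (𝓝 0) := by
    simpa using (((S.psi_lim_a.div_const _).const_mul C).const_add pc).mul
      S.phi_lim_a.inv_tendsto_atTop
  filter_upwards [hdrift, hrest.eventually_lt_const (sub_pos.2 hr₁'),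
    S.eventually_mem_I_lt hxstar] with y hdrift hrest ⟨hy, hyx⟩
  have hdrift' : -y / S.phi y < r₁ := by exact_mod_cast hdrift
  have hsplit : hhatRatio S pc Kc xstar A m y
      = -y / S.phi y + (pc + C * (S.psi y / S.psi xstar)) * (S.phi y)⁻¹ := by
    rw [hhatRatio, if_pos hyx]
    field_simp
    ring
  linarith

lemma exists_forall_hhatRatio_le (hxstar : xstar ∈ S.I) (hS2 : pc + Kc < xstar) (m : ℝ)
    {r : ℝ} (hr : S.Lc < r) {y₀ : ℝ} (hy₀ : y₀ ∈ S.I)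
    (hry₀ : r < hhatRatio S pc Kc xstar A m y₀) :
    ∃ xhat ∈ S.I, xhat ≤ xstar ∧
      ∀ y ∈ S.I, hhatRatio S pc Kc xstar A m y ≤ hhatRatio S pc Kc xstar A m xhat := by
  have hle_xstar := fun y (hy : y ∈ S.I) =>
    hhatRatio_le_hhatRatio_xstar (A := A) hxstar hS2 m hy
  obtain ⟨y₁, hy₁, hry₁⟩ : ∃ y₁ ∈ {y : ℝ | S.a < y ∧ y ≤ xstar},
      r < hhatRatio S pc Kc xstar A m y₁ := by
    rcases le_or_gt y₀ xstar with h | h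
    · exact ⟨y₀, ⟨hy₀.1, h⟩, hry₀⟩
    · exact ⟨xstar, ⟨hxstar.1, le_rfl⟩, hry₀.trans_le (hle_xstar y₀ hy₀ h.le)⟩
  obtain ⟨xhat, hxhat, hmax⟩ := exists_isMaxOn_of_eventually_lt
    (continuousOn_hhatRatio hxstar m) (eventually_hhatRatio_lt hxstar m hr) hy₁ hry₁
  refine ⟨xhat, ⟨hxhat.1, (EReal.coe_le_coe_iff.2 hxhat.2).trans_lt hxstar.2⟩, hxhat.2,
    fun y hy => ?_⟩
  rcases le_or_gt y xstar with h | h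
  · exact hmax ⟨hy.1, h⟩
  · exact (hle_xstar y hy h.le).trans (hmax ⟨hxstar.1, le_rfl⟩)

lemma exists_forall_hhat_div_phi_le (hxstar : xstar ∈ S.I) (hA0 : 0 < A)
    (hS2 : pc + Kc < xstar) {ζ : ℝ → EReal} {μ : EReal} (hζ : PhiMultipleAbove S xstar ζ μ)
    (hμ : 0 ≤ μ) (hLc : S.Lc < S.supRatio (hhat S pc Kc xstar A ζ)) :
    ∃ xhat ∈ S.I, xhat ≤ xstar ∧ ∀ y ∈ S.I,
      hhat S pc Kc xstar A ζ y / S.phi y ≤ hhat S pc Kc xstar A ζ xhat / S.phi xhat := by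
  induction μ using EReal.rec with
  | bot => exact absurd hμ (by simp)
  | top =>
    refine ⟨xstar, hxstar, le_rfl, fun y _ => ?_⟩
    rw [hhat_div_phi_xstar_eq_top hxstar hA0 hζ]
    exact le_top
  | coe m =>
    obtain ⟨r, hLcr, hr⟩ := EReal.exists_between_coe_real hLc
    obtain ⟨⟨y₀, hy₀⟩, hry₀⟩ := lt_iSup_iff.1 hr
    rw [hhat_div_phi_eq_hhatRatio hxstar hζ hy₀, EReal.coe_lt_coe_iff] at hry₀
    obtain ⟨xhat, hxhat, hle, hmax⟩ := exists_forall_hhatRatio_le hxstar hS2 m hLcr hy₀ hry₀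
    refine ⟨xhat, hxhat, hle, fun y hy => ?_⟩
    rw [hhat_div_phi_eq_hhatRatio hxstar hζ hy, hhat_div_phi_eq_hhatRatio hxstar hζ hxhat]
    exact_mod_cast hmax y hy

lemma exists_optimal_hit (hxstar : xstar ∈ S.I) (hA0 : 0 < A)
    (hS1 : ∃ x ∈ S.I, 0 < hpay S pc Kc xstar x) (hS2 : pc + Kc < xstar)
    {ζ : ℝ → EReal} {μ : EReal} (hζ : PhiMultipleAbove S xstar ζ μ) (hμ : 0 ≤ μ)
    (hLc : S.Lc < S.supRatio (hhat S pc Kc xstar A ζ)) :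
    ∃ xhat ∈ S.I, xhat ≤ xstar ∧
      (∀ y ∈ S.I,
        hhat S pc Kc xstar A ζ y / S.phi y ≤ hhat S pc Kc xstar A ζ xhat / S.phi xhat) ∧
      ∀ x ∈ S.I, xhat ≤ x → S.IsOptimal (hhat S pc Kc xstar A ζ) x (S.hit xhat) := by
  obtain ⟨xhat, hxhat, hle, hmax⟩ := exists_forall_hhat_div_phi_le hxstar hA0 hS2 hζ hμ hLc
  have h0 : 0 ≤ hhat S pc Kc xstar A ζ xhat / S.phi xhat :=
    (supRatio_hhat_nonneg hxstar hA0.le hS1 (hζ.nonneg hμ)).trans (iSup_le fun y => hmax y y.2)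
  exact ⟨xhat, hxhat, hle, hmax, fun x hx hxhat_le =>
    S.isOptimal_hit_of_forall_le hxhat hmax h0 hx hxhat_le⟩

lemma Lc_lt_supRatio_of_regimeAlpha (hxstar : xstar ∈ S.I) (hpc : 0 ≤ pc) (hKc : 0 ≤ Kc)
    (hA0 : 0 < A) (hS1 : ∃ x ∈ S.I, 0 < hpay S pc Kc xstar x) (hS2 : pc + Kc < xstar)
    {μ : ℕ → EReal} (hμ0 : ∀ n, 0 ≤ μ n)
    (hμ : ∀ n, PhiMultipleAbove S xstar (ThatIter S pc Kc xstar A n) (μ n))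
    (hα : regimeAlpha S pc Kc xstar A) {ζ : ℝ → EReal}
    (hζ : ∀ x ∈ S.I, xstar ≤ x → ThatIter S pc Kc xstar A 1 x ≤ ζ x) :
    S.Lc < S.supRatio (hhat S pc Kc xstar A ζ) := by
  have hcoeff :
      ∀ n, μ (n + 1) = S.supRatio (hhat S pc Kc xstar A (ThatIter S pc Kc xstar A n)) :=
    fun n => (hμ (n + 1)).unique hxstar
      (thatIter_succ n ▸ (hμ n).that hxstar hA0 hS1 hS2 (hμ0 n))
  calc S.Lc ≤ S.supRatio (toE (hpay S pc Kc xstar)) := Lc_le_supRatio_hpay hxstar hpc hKc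
    _ = μ 1 := by rw [hcoeff 0, ← hhat_zero (A := A)]; rfl
    _ < μ 2 := coeff_one_lt_two_of_regimeAlpha hμ hxstar hA0.le hα
    _ = _ := hcoeff 1
    _ ≤ _ := supRatio_hhat_mono hxstar hA0.le hζ

end Lifetime

theorem two_regimes_general (S : Setup) (pc Kc xstar A : ℝ)
    (hpc : 0 ≤ pc) (hKc : 0 ≤ Kc) (hxstar : xstar ∈ S.I)
    (hA0 : 0 < A)
    (hS1 : ∃ x ∈ S.I, 0 < hpay S pc Kc xstar x)
    (hS2 : pc + Kc < xstar) :
    -- exactly one regime holds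
    ((regimeAlpha S pc Kc xstar A ∧ ¬ regimeBeta S pc Kc xstar A) ∨
     (¬ regimeAlpha S pc Kc xstar A ∧ regimeBeta S pc Kc xstar A)) ∧
    -- in regime (α): optimal stopping times exist for T̂ζ̂_n, n > 0, ...
    (regimeAlpha S pc Kc xstar A →
      (∀ n : ℕ, 0 < n →
        ∃ xhat ∈ S.I, xhat ≤ xstar ∧
          (∀ y ∈ S.I,
            hhat S pc Kc xstar A (ThatIter S pc Kc xstar A n) y / ((S.phi y : ℝ) : EReal)
              ≤ hhat S pc Kc xstar A (ThatIter S pc Kc xstar A n) xhat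
                  / ((S.phi xhat : ℝ) : EReal)) ∧
          ∀ x ∈ S.I, xhat ≤ x →
            S.IsOptimal (hhat S pc Kc xstar A (ThatIter S pc Kc xstar A n)) x (S.hit xhat)) ∧
      -- ... and for T̂V̂
      (∃ xhat ∈ S.I, xhat ≤ xstar ∧
        (∀ y ∈ S.I,
          hhat S pc Kc xstar A (Vhat S pc Kc xstar A) y / ((S.phi y : ℝ) : EReal)
            ≤ hhat S pc Kc xstar A (Vhat S pc Kc xstar A) xhat / ((S.phi xhat : ℝ) : EReal)) ∧
        ∀ x ∈ S.I, xhat ≤ x →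
          S.IsOptimal (hhat S pc Kc xstar A (Vhat S pc Kc xstar A)) x (S.hit xhat))) := by
  choose μ hμ0 hμ using exists_phiMultipleAbove_thatIter hxstar hA0 hS1 hS2
  have hαβ : regimeAlpha S pc Kc xstar A ↔ ¬ regimeBeta S pc Kc xstar A := by
    rw [regimeAlpha_iff hμ hxstar, regimeBeta_iff hμ hxstar, (le_iSup μ 1).lt_iff_ne, ne_comm]
  have hLc := Lc_lt_supRatio_of_regimeAlpha hxstar hpc hKc hA0 hS1 hS2 hμ0 hμ
  refine ⟨by tauto, fun hα => ⟨fun n hn => ?_, ?_⟩⟩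
  · exact exists_optimal_hit hxstar hA0 hS1 hS2 (hμ n) (hμ0 n)
      (hLc hα fun x _ _ => monotone_thatIter hxstar hA0.le x hn)
  · exact exists_optimal_hit hxstar hA0 hS1 hS2 (phiMultipleAbove_vhat hμ)
      (le_iSup_of_le 0 (hμ0 0))
      (hLc hα fun x _ _ => le_iSup (fun n => ThatIter S pc Kc xstar A n x) 1)

/-- Theorem 2 of the paper: exactly one of regimes (α) and (β) holds;
moreover in regime (α) the problems `T̂ζ̂_n` (`n > 0`) and `T̂V̂` admit optimal stopping times of
threshold type: a maximiser `x̂ ≤ x*` of `ĥ(·,ζ̂)/φ_r` such that `τ_x̂` is optimal for `x ≥ x̂`. -/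
theorem two_regimes (S : Setup) (pc Kc xstar A : ℝ)
    (hpc : 0 ≤ pc) (hKc : 0 ≤ Kc) (hxstar : xstar ∈ S.I)
    (hA0 : 0 < A) (hA1 : A < 1)
    (hS1 : ∃ x ∈ S.I, 0 < hpay S pc Kc xstar x)
    (hS2 : pc + Kc < xstar) :
    -- exactly one regime holds
    ((regimeAlpha S pc Kc xstar A ∧ ¬ regimeBeta S pc Kc xstar A) ∨
     (¬ regimeAlpha S pc Kc xstar A ∧ regimeBeta S pc Kc xstar A)) ∧
    -- in regime (α): optimal stopping times exist for T̂ζ̂_n, n > 0, ...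
    (regimeAlpha S pc Kc xstar A →
      (∀ n : ℕ, 0 < n →
        ∃ xhat ∈ S.I, xhat ≤ xstar ∧
          (∀ y ∈ S.I,
            hhat S pc Kc xstar A (ThatIter S pc Kc xstar A n) y / ((S.phi y : ℝ) : EReal)
              ≤ hhat S pc Kc xstar A (ThatIter S pc Kc xstar A n) xhat
                  / ((S.phi xhat : ℝ) : EReal)) ∧
          ∀ x ∈ S.I, xhat ≤ x →
            S.IsOptimal (hhat S pc Kc xstar A (ThatIter S pc Kc xstar A n)) x (S.hit xhat)) ∧
      -- ... and for T̂V̂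
      (∃ xhat ∈ S.I, xhat ≤ xstar ∧
        (∀ y ∈ S.I,
          hhat S pc Kc xstar A (Vhat S pc Kc xstar A) y / ((S.phi y : ℝ) : EReal)
            ≤ hhat S pc Kc xstar A (Vhat S pc Kc xstar A) xhat / ((S.phi xhat : ℝ) : EReal)) ∧
        ∀ x ∈ S.I, xhat ≤ x →
          S.IsOptimal (hhat S pc Kc xstar A (Vhat S pc Kc xstar A)) x (S.hit xhat))) :=
  two_regimes_general S pc Kc xstar A hpc hKc hxstar hA0 hS1 hS2

end
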